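/- Lemma: Let P be a rook placement on a rectangular Ferrers board and let X, Y, Z ∈ P form a 132-pattern. If there is a pivot-path with first element X and last element Y, then there exists a pivot-path J with last element Z such that X J₁ is a 21-pattern (J₁ the first element of J). -/
import Mathlib


open scoped Classical

/-- A cell (square) of the grid: `(column, row)`, both `≥ 1` for genuine cells. -/
abbrev Cell : Type := ℕ × ℕ

/-- The rectangle `R(a,b)` consisting of all cells `(i,j)` with `1 ≤ i ≤ a`, `1 ≤ j ≤ b`. -/
def Rect (a b : ℕ) : Finset Cell := Finset.Icc 1 a ×ˢ Finset.Icc 1 b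

/-- A Ferrers board (French notation): a down-left closed finite set of cells with
positive coordinates. -/
def IsFerrers (F : Finset Cell) : Prop :=
  ∀ p ∈ F, 1 ≤ p.1 ∧ 1 ≤ p.2 ∧
    ∀ q : Cell, 1 ≤ q.1 → 1 ≤ q.2 → q.1 ≤ p.1 → q.2 ≤ p.2 → q ∈ F

/-- A rook placement on a board `F`: a subset of `F` with at most one cell in each
column and at most one cell in each row. -/
def IsPlacement (F P : Finset Cell) : Prop :=
  P ⊆ F ∧ (∀ p ∈ P, ∀ q ∈ P, p.1 = q.1 → p = q) ∧
    (∀ p ∈ P, ∀ q ∈ P, p.2 = q.2 → p = q)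

/-- A decreasing sequence in `P`: columns strictly increase, rows strictly decrease. -/
def IsDecSeq (P : Finset Cell) (k : ℕ) (S : Fin k → Cell) : Prop :=
  (∀ i, S i ∈ P) ∧ ∀ i j : Fin k, i < j → (S i).1 < (S j).1 ∧ (S j).2 < (S i).2

/-- An increasing sequence in `P`: columns and rows both strictly increase. -/
def IsIncSeq (P : Finset Cell) (k : ℕ) (S : Fin k → Cell) : Prop :=
  (∀ i, S i ∈ P) ∧ ∀ i j : Fin k, i < j → (S i).1 < (S j).1 ∧ (S i).2 < (S j).2

/-- Lexicographic comparison of two sequences of cells by their rows (values),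
entry by entry from the left. -/
def rowLexLE (k : ℕ) (S T : Fin k → Cell) : Prop :=
  (∀ i, (S i).2 = (T i).2) ∨
    ∃ i : Fin k, (S i).2 < (T i).2 ∧ ∀ j : Fin k, j < i → (S j).2 = (T j).2

/-- The condition for a left pivot in row `r`, column `c`, given the placement `P` and
the set `prev` of pivots already placed (in rows below `r`): the element of `P` in row
`r` has `c` strictly to its left, column `c` contains an element of `P` below row `r`,
and column `c` contains no pivot yet. -/
def pivCondL (P prev : Finset Cell) (r c : ℕ) : Prop :=
  (∃ x ∈ P, x.2 = r ∧ c < x.1) ∧ (∃ y ∈ P, y.1 = c ∧ y.2 < r) ∧ ∀ v ∈ prev, v.1 ≠ c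

/-- The condition for a right pivot in row `r`, column `c`. -/
def pivCondR (P prev : Finset Cell) (r c : ℕ) : Prop :=
  (∃ x ∈ P, x.2 = r ∧ x.1 < c) ∧ (∃ y ∈ P, y.1 = c ∧ y.2 < r) ∧ ∀ v ∈ prev, v.1 ≠ c

/-- The left pivots among rows `1,…,r`, built row by row from the bottom: no pivot in
the bottom row; in row `r ≥ 2`, if an admissible column exists, the pivot goes in the
rightmost one. -/
noncomputable def pivLAux (P : Finset Cell) : ℕ → Finset Cell
  | 0 => ∅
  | r + 1 =>
    let prev := pivLAux P r
    if r = 0 then prev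
    else if ∃ c, pivCondL P prev (r + 1) c then
      insert (sSup {c | pivCondL P prev (r + 1) c}, r + 1) prev
    else prev

/-- The right pivots among rows `1,…,r`: in row `r ≥ 2`, the pivot goes in the leftmost
admissible column. -/
noncomputable def pivRAux (P : Finset Cell) : ℕ → Finset Cell
  | 0 => ∅
  | r + 1 =>
    let prev := pivRAux P r
    if r = 0 then prev
    else if ∃ c, pivCondR P prev (r + 1) c then
      insert (sInf {c | pivCondR P prev (r + 1) c}, r + 1) prev
    else prev

/-- The left pivots `pivL(P)` of a placement `P` on a board with `n` rows. -/
noncomputable def pivL (n : ℕ) (P : Finset Cell) : Finset Cell := pivLAux P n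

/-- The right pivots `pivR(P)` of a placement `P` on a board with `n` rows. -/
noncomputable def pivR (n : ℕ) (P : Finset Cell) : Finset Cell := pivRAux P n

/-- `ρ(X)`: the row of the (left) pivot in the column of `X`, or `∞` if there is none. -/
noncomputable def rho (n : ℕ) (P : Finset Cell) (X : Cell) : ℕ∞ :=
  if ∃ r, (X.1, r) ∈ pivL n P then ((sSup {r | (X.1, r) ∈ pivL n P} : ℕ) : ℕ∞) else ⊤

/-- `κ(X)`: the column of the (left) pivot in the row of `X`, or `0` if there is none. -/
noncomputable def kappa (n : ℕ) (P : Finset Cell) (X : Cell) : ℕ :=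
  sSup {c | (c, X.2) ∈ pivL n P}

/-- A pivot-path: an increasing subsequence `I` of `P` such that each consecutive pair
creates a pivot, i.e. `ρ(I_i) = row(I_{i+1})` for all `i`. -/
def IsPivotPath (n : ℕ) (P : Finset Cell) (m : ℕ) (I : Fin m → Cell) : Prop :=
  IsIncSeq P m I ∧ ∀ (i : Fin m) (h : i.1 + 1 < m),
    rho n P (I i) = ((I ⟨i.1 + 1, h⟩).2 : ℕ∞)


lemma pivLAux_succ (P : Finset Cell) (r : ℕ) :
    pivLAux P (r + 1) =
      if r = 0 then pivLAux P r
      else if ∃ c, pivCondL P (pivLAux P r) (r + 1) c then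
        insert (sSup {c | pivCondL P (pivLAux P r) (r + 1) c}, r + 1) (pivLAux P r)
      else pivLAux P r := by
  rw [pivLAux]

lemma pivLAux_mono (P : Finset Cell) {r s : ℕ} (h : r ≤ s) :
    pivLAux P r ⊆ pivLAux P s := by
  induction s, h using Nat.le_induction with
  | base => exact subset_rfl
  | succ s hs ih =>
    refine ih.trans ?_
    rw [pivLAux_succ]
    split
    · exact subset_rfl
    · split
      · exact Finset.subset_insert _ _
      · exact subset_rfl

lemma pivCond_bdd {m : ℕ} {P : Finset Cell} (hm : ∀ x ∈ P, x.1 ≤ m)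
    (prev : Finset Cell) (r : ℕ) : BddAbove {c | pivCondL P prev r c} := by
  refine ⟨m, fun c hc => ?_⟩
  obtain ⟨x, hx, _, hcx⟩ := hc.1
  exact le_trans hcx.le (hm x hx)

lemma pivLAux_spec {m : ℕ} {P : Finset Cell} (hm : ∀ x ∈ P, x.1 ≤ m) (r : ℕ) :
    (∀ p ∈ pivLAux P r, 2 ≤ p.2 ∧ p.2 ≤ r) ∧
      (∀ p ∈ pivLAux P r, ∀ q ∈ pivLAux P r, p.1 = q.1 → p = q) := by
  induction r with
  | zero => simp [pivLAux]
  | succ r ih =>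
    rw [pivLAux_succ]
    split
    · exact ⟨fun p hp => ⟨(ih.1 p hp).1, (ih.1 p hp).2.trans (Nat.le_succ r)⟩, ih.2⟩
    · rename_i hr0
      split
      · rename_i hex
        have hmem : sSup {c | pivCondL P (pivLAux P r) (r + 1) c} ∈
            {c | pivCondL P (pivLAux P r) (r + 1) c} :=
          Nat.sSup_mem hex (pivCond_bdd hm _ _)
        constructor
        · intro p hp
          rcases Finset.mem_insert.1 hp with h | h
          · subst h; exact ⟨by omega, le_rfl⟩
          · exact ⟨(ih.1 p h).1, (ih.1 p h).2.trans (Nat.le_succ r)⟩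
        · intro p hp q hq hpq
          rcases Finset.mem_insert.1 hp with h | h <;>
            rcases Finset.mem_insert.1 hq with h' | h'
          · rw [h, h']
          · exfalso
            exact hmem.2.2 q h' (by rw [← hpq, h])
          · exfalso
            exact hmem.2.2 p h (by rw [hpq, h'])
          · exact ih.2 p h q h' hpq
      · exact ⟨fun p hp => ⟨(ih.1 p hp).1, (ih.1 p hp).2.trans (Nat.le_succ r)⟩, ih.2⟩

/-- at most one pivot per column -/
lemma pivL_col_unique {m n : ℕ} {P : Finset Cell} (hm : ∀ x ∈ P, x.1 ≤ m)
    {p q : Cell} (hp : p ∈ pivL n P) (hq : q ∈ pivL n P) (h : p.1 = q.1) : p = q :=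
  (pivLAux_spec hm n).2 p hp q hq h

lemma rho_of_mem {m n : ℕ} {P : Finset Cell} (hm : ∀ x ∈ P, x.1 ≤ m)
    {c r : ℕ} (h : (c, r) ∈ pivL n P) {X : Cell} (hX : X.1 = c) :
    rho n P X = (r : ℕ∞) := by
  subst hX
  have hset : {r' | (X.1, r') ∈ pivL n P} = {r} := by
    ext r'
    simp only [Set.mem_setOf_eq, Set.mem_singleton_iff]
    constructor
    · intro h'
      exact congrArg Prod.snd (pivL_col_unique hm h' h rfl)
    · rintro rfl; exact h
  rw [rho, if_pos ⟨r, h⟩, hset, csSup_singleton]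

lemma mem_of_rho {m n : ℕ} {P : Finset Cell} (hm : ∀ x ∈ P, x.1 ≤ m)
    {r : ℕ} {X : Cell} (h : rho n P X = (r : ℕ∞)) : (X.1, r) ∈ pivL n P := by
  rw [rho] at h
  split at h
  · rename_i hex
    obtain ⟨r0, hr0⟩ := hex
    have := rho_of_mem hm hr0 (X := X) rfl
    rw [rho, if_pos ⟨r0, hr0⟩] at this
    rw [this] at h
    have : r0 = r := by exact_mod_cast h
    rwa [← this]
  · exact absurd h (by simp)

/-- existence of a pivot in row `r` once some admissible column exists -/
lemma pivot_in_row {m n : ℕ} {P : Finset Cell} (hm : ∀ x ∈ P, x.1 ≤ m)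
    {r : ℕ} (hr2 : 2 ≤ r) (hrn : r ≤ n) {c0 : ℕ}
    (hc0 : pivCondL P (pivLAux P (r - 1)) r c0) :
    ∃ c, (c, r) ∈ pivL n P ∧ c0 ≤ c ∧ pivCondL P (pivLAux P (r - 1)) r c := by
  obtain ⟨r', rfl⟩ : ∃ r', r = r' + 1 := ⟨r - 1, by omega⟩
  have hr'0 : r' ≠ 0 := by omega
  have h1 : r' + 1 - 1 = r' := rfl
  rw [h1] at hc0 ⊢
  have hex : ∃ c, pivCondL P (pivLAux P r') (r' + 1) c := ⟨c0, hc0⟩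
  set S := {c | pivCondL P (pivLAux P r') (r' + 1) c} with hS
  have hmem : sSup S ∈ S := Nat.sSup_mem hex (pivCond_bdd hm _ _)
  refine ⟨sSup S, ?_, le_csSup (pivCond_bdd hm _ _) hc0, hmem⟩
  have : (sSup S, r' + 1) ∈ pivLAux P (r' + 1) := by
    rw [pivLAux_succ, if_neg hr'0, if_pos hex]
    exact Finset.mem_insert_self _ _
  exact pivLAux_mono P hrn this

lemma rect_bounds {m n : ℕ} {P : Finset Cell} (hP : IsPlacement (Rect m n) P)
    {x : Cell} (hx : x ∈ P) : 1 ≤ x.1 ∧ x.1 ≤ m ∧ 1 ≤ x.2 ∧ x.2 ≤ n := by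
  have := hP.1 hx
  rw [Rect, Finset.mem_product, Finset.mem_Icc, Finset.mem_Icc] at this
  exact ⟨this.1.1, this.1.2, this.2.1, this.2.2⟩

/-- Key step: if Z' sits strictly between two consecutive path rows and strictly
right of the lower path element, then there is W with a pivot-link to Z'. -/
lemma key_step {m n : ℕ} {P : Finset Cell} (hP : IsPlacement (Rect m n) P)
    {A B Z' : Cell} (hA : A ∈ P) (hZ' : Z' ∈ P)
    (hpiv : (A.1, B.2) ∈ pivL n P)
    (hrow1 : A.2 < Z'.2) (hrow2 : Z'.2 < B.2) (hcol : A.1 < Z'.1) :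
    ∃ W ∈ P, rho n P W = (Z'.2 : ℕ∞) ∧ A.1 < W.1 ∧ W.1 < Z'.1 ∧ W.2 < Z'.2 := by
  have hm : ∀ x ∈ P, x.1 ≤ m := fun x hx => (rect_bounds hP hx).2.1
  set r := Z'.2 with hr
  have hA' := rect_bounds hP hA
  have hZ'' := rect_bounds hP hZ'
  have hr2 : 2 ≤ r := by omega
  have hrn : r ≤ n := hZ''.2.2.2
  have hc0 : pivCondL P (pivLAux P (r - 1)) r A.1 := by
    refine ⟨⟨Z', hZ', rfl, hcol⟩, ⟨A, hA, rfl, hrow1⟩, ?_⟩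
    intro v hv hveq
    have hv' : v ∈ pivL n P := pivLAux_mono P (by omega) hv
    have := pivL_col_unique hm hv' hpiv hveq
    have hvr := ((pivLAux_spec hm (r - 1)).1 v hv).2
    rw [this] at hvr
    omega
  obtain ⟨c, hcmem, hc0le, hcond⟩ := pivot_in_row hm hr2 hrn hc0
  obtain ⟨⟨x, hx, hxr, hcx⟩, ⟨W, hW, hWc, hWr⟩, -⟩ := hcond
  have hxZ : x = Z' := hP.2.2 x hx Z' hZ' (by rw [hxr])
  have hcne : c ≠ A.1 := by
    intro h
    have h2 := pivL_col_unique hm hcmem hpiv (by simpa using h)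
    rw [Prod.ext_iff] at h2
    simp only at h2
    omega
  refine ⟨W, hW, rho_of_mem hm hcmem hWc, by omega, by rw [hWc]; rw [hxZ] at hcx; omega, hWr⟩

lemma inc_le {P : Finset Cell} {l : ℕ} {I : Fin l → Cell} (h : IsIncSeq P l I)
    {i j : Fin l} (hij : i ≤ j) : (I i).1 ≤ (I j).1 ∧ (I i).2 ≤ (I j).2 := by
  rcases eq_or_lt_of_le hij with rfl | hlt
  · exact ⟨le_rfl, le_rfl⟩
  · exact ⟨(h.2 i j hlt).1.le, (h.2 i j hlt).2.le⟩

lemma not_on_rows {l : ℕ} {I : Fin l → Cell}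
    (hmono : ∀ i j : Fin l, i < j → (I i).2 < (I j).2)
    {j : ℕ} (hj : j + 1 < l) {w : ℕ}
    (h1 : (I ⟨j, by omega⟩).2 < w) (h2 : w < (I ⟨j + 1, hj⟩).2) :
    ∀ t : Fin l, (I t).2 ≠ w := by
  intro t ht
  rcases le_or_gt t.1 j with h | h
  · rcases eq_or_lt_of_le h with h' | h'
    · have : t = ⟨j, by omega⟩ := Fin.ext h'
      rw [this] at ht; omega
    · have := hmono t ⟨j, by omega⟩ h'
      omega
  · rcases eq_or_lt_of_le (Nat.succ_le_of_lt h) with h' | h'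
    · have : (⟨j + 1, hj⟩ : Fin l) = t := Fin.ext h'
      rw [this] at h2; omega
    · have := hmono ⟨j + 1, hj⟩ t h'
      omega

lemma exists_gap {l : ℕ} (I : Fin l → Cell) (hl : 0 < l)
    (hmono : ∀ i j : Fin l, i < j → (I i).2 < (I j).2) (w : ℕ)
    (hne : ∀ t : Fin l, (I t).2 ≠ w) (h0 : (I ⟨0, hl⟩).2 < w) :
    ∀ j : ℕ, ∀ hj : j + 1 < l, w < (I ⟨j + 1, hj⟩).2 →
    ∃ j' : ℕ, ∃ h : j' + 1 < l, (I ⟨j', by omega⟩).2 < w ∧ w < (I ⟨j' + 1, h⟩).2 := by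
  intro j
  induction j with
  | zero => exact fun hj hub => ⟨0, hj, h0, hub⟩
  | succ j ih =>
    intro hj hub
    rcases lt_trichotomy w (I ⟨j + 1, by omega⟩).2 with h | h | h
    · exact ih (by omega) h
    · exact absurd h.symm (hne ⟨j + 1, by omega⟩)
    · exact ⟨j + 1, hj, h, hub⟩

lemma two_path {n : ℕ} {P : Finset Cell} {W Z' : Cell} (hW : W ∈ P) (hZ' : Z' ∈ P)
    (hc : W.1 < Z'.1) (hr : W.2 < Z'.2) (hrho : rho n P W = (Z'.2 : ℕ∞)) :
    ∃ J : Fin 2 → Cell, IsPivotPath n P 2 J ∧ J ⟨1, by omega⟩ = Z' ∧ J ⟨0, by omega⟩ = W := by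
  refine ⟨fun i => if i.1 = 0 then W else Z', ⟨⟨?_, ?_⟩, ?_⟩, by norm_num, by norm_num⟩
  · intro i
    by_cases h : i.1 = 0 <;> simp [h, hW, hZ']
  · intro i j hij
    have h1 : i.1 = 0 := by omega
    have h2 : j.1 = 1 := by have := j.isLt; have : i.1 < j.1 := hij; omega
    simp [h1, h2, hc, hr]
  · intro i h
    have h1 : i.1 = 0 := by omega
    simp [h1, hrho]

lemma extend_path {n : ℕ} {P : Finset Cell} {k : ℕ} (hk : 0 < k) {J' : Fin k → Cell}
    (h : IsPivotPath n P k J') {Z' : Cell} (hZ : Z' ∈ P)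
    (hcol : (J' ⟨k - 1, by omega⟩).1 < Z'.1) (hrow : (J' ⟨k - 1, by omega⟩).2 < Z'.2)
    (hrho : rho n P (J' ⟨k - 1, by omega⟩) = (Z'.2 : ℕ∞)) :
    ∃ J : Fin (k + 1) → Cell, IsPivotPath n P (k + 1) J ∧ J ⟨k, by omega⟩ = Z' ∧
      J ⟨0, by omega⟩ = J' ⟨0, hk⟩ := by
  refine ⟨fun i => if hik : i.1 < k then J' ⟨i.1, hik⟩ else Z', ⟨⟨?_, ?_⟩, ?_⟩, ?_, ?_⟩
  · intro i
    beta_reduce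
    by_cases hik : i.1 < k
    · rw [dif_pos hik]; exact h.1.1 _
    · rw [dif_neg hik]; exact hZ
  · intro i j hij
    beta_reduce
    have hij' : i.1 < j.1 := hij
    have hik : i.1 < k := by have := j.isLt; omega
    rw [dif_pos hik]
    by_cases hjk : j.1 < k
    · rw [dif_pos hjk]
      exact h.1.2 _ _ hij'
    · rw [dif_neg hjk]
      have h2 : (⟨i.1, hik⟩ : Fin k) ≤ ⟨k - 1, by omega⟩ := by
        simp only [Fin.le_def]; omega
      have := inc_le h.1 h2
      omega
  · intro i hi
    beta_reduce
    have hik0 : i.1 < k := by omega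
    rw [dif_pos hik0]
    simp only [Fin.val_mk]
    by_cases hik : i.1 + 1 < k
    · rw [dif_pos hik]
      exact h.2 ⟨i.1, hik0⟩ hik
    · rw [dif_neg hik]
      have heq : i.1 = k - 1 := by omega
      rw [show (⟨i.1, hik0⟩ : Fin k) = ⟨k - 1, by omega⟩ from Fin.ext heq]
      exact hrho
  · beta_reduce
    rw [dif_neg (lt_irrefl k)]
  · beta_reduce
    rw [dif_pos hk]

lemma build_path {m n : ℕ} {P : Finset Cell} (hP : IsPlacement (Rect m n) P)
    {l : ℕ} (hl : 0 < l) (I : Fin l → Cell) (hI : IsPivotPath n P l I) :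
    ∀ N : ℕ, ∀ Z' : Cell, Z'.2 ≤ N → Z' ∈ P →
    (∃ j : ℕ, ∃ hj : j + 1 < l, (I ⟨j, by omega⟩).2 < Z'.2 ∧ Z'.2 < (I ⟨j + 1, hj⟩).2 ∧
      (I ⟨j, by omega⟩).1 < Z'.1) →
    ∃ (k : ℕ) (hk : 0 < k) (J : Fin k → Cell), IsPivotPath n P k J ∧
      J ⟨k - 1, by omega⟩ = Z' ∧ (I ⟨0, hl⟩).1 < (J ⟨0, hk⟩).1 ∧
      (J ⟨0, hk⟩).2 < (I ⟨0, hl⟩).2 := by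
  have hm : ∀ x ∈ P, x.1 ≤ m := fun x hx => (rect_bounds hP hx).2.1
  have hmono : ∀ i j : Fin l, i < j → (I i).2 < (I j).2 := fun i j h => (hI.1.2 i j h).2
  intro N
  induction N with
  | zero =>
    intro Z' hN _ hex
    obtain ⟨j, hj, h1, -, -⟩ := hex
    omega
  | succ N ih =>
    intro Z' hN hZ' hex
    obtain ⟨j, hj, hr1, hr2, hc⟩ := hex
    have hA : I ⟨j, by omega⟩ ∈ P := hI.1.1 _
    have hpiv : ((I ⟨j, by omega⟩).1, (I ⟨j + 1, hj⟩).2) ∈ pivL n P :=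
      mem_of_rho hm (hI.2 ⟨j, by omega⟩ hj)
    obtain ⟨W, hW, hrhoW, hAW, hWZ, hWr⟩ := key_step hP hA hZ' hpiv hr1 hr2 hc
    have hXA : (I ⟨0, hl⟩).1 ≤ (I ⟨j, by omega⟩).1 ∧
        (I ⟨0, hl⟩).2 ≤ (I ⟨j, by omega⟩).2 :=
      inc_le hI.1 (by simp [Fin.le_def])
    have hXW : (I ⟨0, hl⟩).1 < W.1 := by omega
    rcases lt_trichotomy W.2 (I ⟨0, hl⟩).2 with hcase | hcase | hcase
    · -- base case: two-element path
      obtain ⟨J, hJ, hJ1, hJ0⟩ := two_path hW hZ' hWZ hWr hrhoW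
      exact ⟨2, by omega, J, hJ, hJ1, by rw [hJ0]; exact hXW, by rw [hJ0]; exact hcase⟩
    · exfalso
      have : W = I ⟨0, hl⟩ := hP.2.2 W hW _ (hI.1.1 _) hcase
      rw [this] at hXW
      omega
    · -- recursive case
      have hZrows : ∀ t : Fin l, (I t).2 ≠ Z'.2 := not_on_rows hmono hj hr1 hr2
      have hWrows : ∀ t : Fin l, (I t).2 ≠ W.2 := by
        intro t ht
        have hWt : I t = W := hP.2.2 _ (hI.1.1 t) W hW ht
        by_cases htl : t.1 + 1 < l
        · have h1 := hI.2 t htl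
          rw [hWt, hrhoW] at h1
          have h2 : (I ⟨t.1 + 1, htl⟩).2 = Z'.2 := by exact_mod_cast h1.symm
          exact hZrows _ h2
        · have ht1 : t = ⟨l - 1, by omega⟩ := Fin.ext (by have := t.isLt; simp only [Fin.val_mk]; omega)
          have h3 : (⟨j + 1, hj⟩ : Fin l) ≤ ⟨l - 1, by omega⟩ := by
            simp only [Fin.le_def]; omega
          have := (inc_le hI.1 h3).2
          rw [← ht1, hWt] at this
          omega
      obtain ⟨j', hj', hg1, hg2⟩ := exists_gap I hl hmono W.2 hWrows hcase j hj (by omega)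
      have hj'j : j' ≤ j := by
        by_contra hcon
        have : (⟨j + 1, hj⟩ : Fin l) ≤ ⟨j', by omega⟩ := by simp only [Fin.le_def]; omega
        have := (inc_le hI.1 this).2
        omega
      have hcj' : (I ⟨j', by omega⟩).1 < W.1 := by
        have : (⟨j', by omega⟩ : Fin l) ≤ ⟨j, by omega⟩ := by simp only [Fin.le_def]; omega
        have := (inc_le hI.1 this).1
        omega
      obtain ⟨k, hk, J', hJ', hJ'end, hJ'0c, hJ'0r⟩ :=
        ih W (by omega) hW ⟨j', hj', hg1, hg2, hcj'⟩
      obtain ⟨J, hJ, hJ1, hJ0⟩ := extend_path hk hJ' hZ'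
        (by rw [hJ'end]; exact hWZ) (by rw [hJ'end]; exact hWr) (by rw [hJ'end]; exact hrhoW)
      refine ⟨k + 1, by omega, J, hJ, ?_, ?_, ?_⟩
      · rw [show (⟨k + 1 - 1, by omega⟩ : Fin (k + 1)) = ⟨k, by omega⟩ from rfl]
        exact hJ1
      · rw [hJ0]; exact hJ'0c
      · rw [hJ0]; exact hJ'0r

/-- **Lemma.** If `X, Y, Z ∈ P` form a 132-pattern and there is a pivot-path from `X`
to `Y`, then there exists a pivot-path `J` with last element `Z` such that `X J₁` is a
21-pattern. -/
theorem lemma_pivot2 (m n : ℕ) (P : Finset Cell) (hP : IsPlacement (Rect m n) P)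
    (X Y Z : Cell) (hX : X ∈ P) (hY : Y ∈ P) (hZ : Z ∈ P)
    (h132 : X.1 < Y.1 ∧ Y.1 < Z.1 ∧ X.2 < Z.2 ∧ Z.2 < Y.2)
    (hpath : ∃ (l : ℕ) (hl : 0 < l) (I : Fin l → Cell), IsPivotPath n P l I ∧
      I ⟨0, hl⟩ = X ∧ I ⟨l - 1, by omega⟩ = Y) :
    ∃ (l : ℕ) (hl : 0 < l) (J : Fin l → Cell), IsPivotPath n P l J ∧
      J ⟨l - 1, by omega⟩ = Z ∧ X.1 < (J ⟨0, hl⟩).1 ∧ (J ⟨0, hl⟩).2 < X.2 := by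
  obtain ⟨l, hl, I, hI, hI0, hIl⟩ := hpath
  obtain ⟨hXY1, hYZ1, hXZ2, hZY2⟩ := h132
  have hmono : ∀ i j : Fin l, i < j → (I i).2 < (I j).2 := fun i j h => (hI.1.2 i j h).2
  have hl2 : 2 ≤ l := by
    by_contra hcon
    have h1 : (⟨0, hl⟩ : Fin l) = ⟨l - 1, by omega⟩ := Fin.ext (by simp only [Fin.val_mk]; omega)
    rw [h1, hIl] at hI0
    rw [hI0] at hXY1
    omega
  have hIl' : (I ⟨l - 1, by omega⟩ : Cell) = Y := hIl
  have hne : ∀ t : Fin l, (I t).2 ≠ Z.2 := by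
    intro t ht
    have hIt : I t = Z := hP.2.2 _ (hI.1.1 t) Z hZ ht
    have hle : t ≤ (⟨l - 1, by omega⟩ : Fin l) := by
      simp only [Fin.le_def, Fin.val_mk]; have := t.isLt; omega
    have h2 := (inc_le hI.1 hle).1
    rw [hIt, hIl'] at h2
    omega
  have h0 : (I ⟨0, hl⟩).2 < Z.2 := by rw [hI0]; exact hXZ2
  have hub : Z.2 < (I ⟨(l - 2) + 1, by omega⟩).2 := by
    have h1 : (⟨(l - 2) + 1, by omega⟩ : Fin l) = ⟨l - 1, by omega⟩ :=
      Fin.ext (by simp only [Fin.val_mk]; omega)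
    rw [h1, hIl']
    exact hZY2
  obtain ⟨j', hj', hg1, hg2⟩ := exists_gap I hl hmono Z.2 hne h0 (l - 2) (by omega) hub
  have hcol : (I ⟨j', by omega⟩).1 < Z.1 := by
    have hle : (⟨j', by omega⟩ : Fin l) ≤ ⟨l - 1, by omega⟩ := by
      simp only [Fin.le_def, Fin.val_mk]; omega
    have h2 := (inc_le hI.1 hle).1
    rw [hIl'] at h2
    omega
  obtain ⟨k, hk, J, hJ, hJend, hJc, hJr⟩ :=
    build_path hP hl I hI Z.2 Z le_rfl hZ ⟨j', hj', hg1, hg2, hcol⟩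
  rw [hI0] at hJc hJr
  exact ⟨k, hk, J, hJ, hJend, hJc, hJr⟩
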